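/- No cancellation under a parity condition: let I, J ⊆ [n] with I ∩ J = ∅, I ∪ J = [n], J nonempty, and I', J' ⊆ [n] with I' ∩ J' = ∅, I' ∪ J' = [n], J' nonempty, and suppose n₁ = |I| and n₁' = |I'| have different parities. Then the Boolean function f : 𝔽₂ⁿ → 𝔽₂ defined by f(a) = (∏_{i ∈ I} a_i)(∑_{j ∈ J} a_j) + (∏_{i ∈ I'} a_i)(∑_{j ∈ J'} a_j) has Hamming weight w_H(f) = 2^{n − n₁ − 1} + 2^{n − n₁' − 1}. -/

import Mathlib

/-!
Both summands are supported on vectors that are `1` on `I` (resp. `I'`) and have odd sum over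
`J` (resp. `J'`); translating by a unit vector at a point of `J` shows that exactly half of the
`2^(n - n₁)` vectors that are `1` on `I` lie in the first support. A vector in both supports would
have total coordinate sum `n₁ + 1 = n₁' + 1` in `𝔽₂`, contradicting the parity condition, so the
supports are disjoint and the weights add.
-/

open Finset

def hammingWeight {n : ℕ} (f : (Fin n → ZMod 2) → ZMod 2) : ℕ :=
  (Finset.univ.filter fun a : Fin n → ZMod 2 => f a = 1).card

lemma ZMod.two_mul_eq_one_iff (x y : ZMod 2) : x * y = 1 ↔ x = 1 ∧ y = 1 := by
  revert x y; decide

lemma ZMod.two_add_eq_one_iff {x y : ZMod 2} (h : ¬(x = 1 ∧ y = 1)) :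
    x + y = 1 ↔ x = 1 ∨ y = 1 := by
  revert x y; decide

lemma ZMod.two_add_one_eq_one_iff (x : ZMod 2) : x + 1 = 1 ↔ ¬x = 1 := by
  revert x; decide

lemma ZMod.two_prod_eq_one_iff {ι : Type*} (s : Finset ι) (a : ι → ZMod 2) :
    ∏ i ∈ s, a i = 1 ↔ ∀ i ∈ s, a i = 1 := by
  have h : ∀ x : ZMod 2, x = 1 ↔ x ≠ 0 := by decide
  simp only [h, ne_eq, Finset.prod_eq_zero_iff, not_exists, not_and]

lemma hammingWeight_add_of_disjoint {n : ℕ} (f g : (Fin n → ZMod 2) → ZMod 2)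
    (h : ∀ a, ¬(f a = 1 ∧ g a = 1)) :
    hammingWeight (fun a => f a + g a) = hammingWeight f + hammingWeight g := by
  unfold hammingWeight
  rw [← card_union_of_disjoint (disjoint_filter.2 fun a _ hf hg => h a ⟨hf, hg⟩), ← filter_or]
  congr 1
  ext a
  simp only [mem_filter, mem_univ, true_and, ZMod.two_add_eq_one_iff (h a)]

section

variable {ι : Type*} [Fintype ι] [DecidableEq ι]

lemma card_filter_forall_mem_eq_one (I : Finset ι) :
    #{a : ι → ZMod 2 | ∀ i ∈ I, a i = 1} = 2 ^ #Iᶜ := by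
  have : ({a : ι → ZMod 2 | ∀ i ∈ I, a i = 1} : Finset _) =
      Fintype.piFinset fun i => if i ∈ I then {1} else univ := by
    ext a
    simp only [mem_filter, mem_univ, true_and, Fintype.mem_piFinset]
    refine forall_congr' fun i => ?_
    split_ifs <;> simp [*]
  rw [this, Fintype.card_piFinset]
  simp [apply_ite, prod_ite, filter_not, compl_eq_univ_sdiff]

lemma two_mul_card_filter_forall_mem_eq_one_and_sum_eq_one {I J : Finset ι}
    (hIJ : Disjoint I J) (hJ : J.Nonempty) :
    2 * #{a : ι → ZMod 2 | (∀ i ∈ I, a i = 1) ∧ ∑ j ∈ J, a j = 1} = 2 ^ #Iᶜ := by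
  obtain ⟨j₀, hj₀⟩ := hJ
  set e : ι → ZMod 2 := Pi.single j₀ 1
  have he_I : ∀ i ∈ I, e i = 0 := fun i hi =>
    Pi.single_eq_of_ne (ne_of_mem_of_not_mem hi (disjoint_right.1 hIJ hj₀)) _
  have he_J : ∑ j ∈ J, e j = 1 := by simp [e, hj₀]
  have hflip : #{a : ι → ZMod 2 | (∀ i ∈ I, a i = 1) ∧ ∑ j ∈ J, a j = 1} =
      #{a : ι → ZMod 2 | (∀ i ∈ I, a i = 1) ∧ ¬∑ j ∈ J, a j = 1} := by
    refine card_equiv (Equiv.addRight e) fun a => ?_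
    simp +contextual only [mem_filter, mem_univ, true_and, Equiv.coe_addRight, Pi.add_apply,
      sum_add_distrib, he_I, add_zero, he_J, ZMod.two_add_one_eq_one_iff, not_not]
  have hsplit := card_filter_add_card_filter_not
    (s := ({a : ι → ZMod 2 | ∀ i ∈ I, a i = 1} : Finset _)) fun a => ∑ j ∈ J, a j = 1
  rw [filter_filter, filter_filter, card_filter_forall_mem_eq_one, ← hflip] at hsplit
  rw [two_mul, hsplit]

lemma card_filter_prod_mul_sum_eq_one {I J : Finset ι} (hIJ : Disjoint I J) (hJ : J.Nonempty) :
    #{a : ι → ZMod 2 | (∏ i ∈ I, a i) * ∑ j ∈ J, a j = 1} = 2 ^ (#Iᶜ - 1) := by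
  have hIc : #Iᶜ ≠ 0 := (card_pos.2 (hJ.mono (subset_compl_iff_disjoint_left.2 hIJ))).ne'
  have h := two_mul_card_filter_forall_mem_eq_one_and_sum_eq_one hIJ hJ
  rw [← mul_pow_sub_one hIc] at h
  simpa only [ZMod.two_mul_eq_one_iff, ZMod.two_prod_eq_one_iff] using
    Nat.eq_of_mul_eq_mul_left two_pos h

lemma sum_eq_card_add_one_of_prod_mul_sum_eq_one {I J : Finset ι} (hIJ : Disjoint I J)
    (hIJunion : I ∪ J = univ) {a : ι → ZMod 2} (ha : (∏ i ∈ I, a i) * ∑ j ∈ J, a j = 1) :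
    ∑ i, a i = #I + 1 := by
  rw [ZMod.two_mul_eq_one_iff, ZMod.two_prod_eq_one_iff] at ha
  rw [← hIJunion, sum_union hIJ, sum_congr rfl ha.1, ha.2, sum_const, nsmul_one]

end

lemma hammingWeight_prod_mul_sum {n : ℕ} {I J : Finset (Fin n)} (hIJ : Disjoint I J)
    (hJ : J.Nonempty) :
    hammingWeight (fun a : Fin n → ZMod 2 => (∏ i ∈ I, a i) * ∑ j ∈ J, a j) =
      2 ^ (n - #I - 1) := by
  rw [hammingWeight, card_filter_prod_mul_sum_eq_one hIJ hJ, card_compl, Fintype.card_fin]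

/-- no cancellation under a parity condition. If `I ⊔ J = [n]`,
`I' ⊔ J' = [n]` with `J, J'` nonempty and `|I| = n₁`, `|I'| = n₁'` of different
parities, then `a ↦ (∏_{i ∈ I} a_i)(∑_{j ∈ J} a_j) + (∏_{i ∈ I'} a_i)(∑_{j ∈ J'} a_j)`
has Hamming weight `2^{n - n₁ - 1} + 2^{n - n₁' - 1}`. -/
theorem weight_sum_factored_different_parity {n : ℕ} (I J I' J' : Finset (Fin n))
    (hIJ : Disjoint I J) (hIJunion : I ∪ J = Finset.univ) (hJ : J.Nonempty)
    (hIJ' : Disjoint I' J') (hIJunion' : I' ∪ J' = Finset.univ) (hJ' : J'.Nonempty)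
    (n₁ n₁' : ℕ) (hn₁ : I.card = n₁) (hn₁' : I'.card = n₁')
    (hpar : n₁ % 2 ≠ n₁' % 2) :
    hammingWeight (fun a : Fin n → ZMod 2 =>
        (∏ i ∈ I, a i) * (∑ j ∈ J, a j) + (∏ i ∈ I', a i) * (∑ j ∈ J', a j)) =
      2 ^ (n - n₁ - 1) + 2 ^ (n - n₁' - 1) := by
  subst hn₁ hn₁'
  have hsupp : ∀ a : Fin n → ZMod 2, ¬((∏ i ∈ I, a i) * (∑ j ∈ J, a j) = 1 ∧
      (∏ i ∈ I', a i) * (∑ j ∈ J', a j) = 1) := by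
    rintro a ⟨h, h'⟩
    have hcard := (sum_eq_card_add_one_of_prod_mul_sum_eq_one hIJ hIJunion h).symm.trans
      (sum_eq_card_add_one_of_prod_mul_sum_eq_one hIJ' hIJunion' h')
    exact hpar ((ZMod.natCast_eq_natCast_iff' _ _ _).1 (add_right_cancel hcard))
  rw [hammingWeight_add_of_disjoint _ _ hsupp, hammingWeight_prod_mul_sum hIJ hJ,
    hammingWeight_prod_mul_sum hIJ' hJ']
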